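/- Let p be a prime and G an elementary abelian p-group of rank n ≥ 2 (so |G| = p^n), and work inside ℚ[G]. Then p·J ⊆ I ⊆ J, and moreover p^{n+1}·ℤ[G] ⊆ p·J. -/

import Mathlib

/-!
Every generator `p^n e_H` of `J` with `H ≠ G` is already a generator of `I`, so the only issue in
`p·J ⊆ I` is `p^(n+1) e_G = p·G̃`. Take a subgroup `H` of index `p` (Sylow) and a left transversal
`S` of it: then `(∑_{s ∈ S} s)·(∑_{h ∈ H} h) = G̃`, and `p^n e_H = p·∑_{h ∈ H} h`, so
`p·G̃ = (∑_{s ∈ S} s)·p^n e_H ∈ I`. For the last inclusion, `g = g·e_{1} ∈ Γ` for the trivial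
subgroup `{1}`.
-/

open scoped Classical

noncomputable section

/-- The elementary abelian `p`-group of rank `n`, written multiplicatively. -/
abbrev EAG (p n : ℕ) : Type := Multiplicative (Fin n → ZMod p)

/-- The canonical ring homomorphism `ℤ[G] →+* ℚ[G]`. -/
def zgToQg (p n : ℕ) : MonoidAlgebra ℤ (EAG p n) →+* MonoidAlgebra ℚ (EAG p n) :=
  ((MonoidAlgebra.lift ℤ (MonoidAlgebra ℚ (EAG p n)) (EAG p n))
    (MonoidAlgebra.of ℚ (EAG p n))).toRingHom

/-- `ℚ[G]` as an algebra over `ℤ[G]` via the canonical map. -/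
noncomputable instance zgAlgebra (p n : ℕ) :
    Algebra (MonoidAlgebra ℤ (EAG p n)) (MonoidAlgebra ℚ (EAG p n)) :=
  (zgToQg p n).toAlgebra

/-- The idempotent `e_H = (1/|H|) ∑_{h ∈ H} h ∈ ℚ[G]` attached to a subgroup `H`. -/
def eIdem (p n : ℕ) [NeZero p] (H : Subgroup (EAG p n)) : MonoidAlgebra ℚ (EAG p n) :=
  (Nat.card H : ℚ)⁻¹ • ∑ h : H, MonoidAlgebra.of ℚ (EAG p n) (h : EAG p n)

/-- The canonical image of `ℤ[G]` in `ℚ[G]`: the `ℤ`-span of the group elements. -/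
def ZGimage (p n : ℕ) : Submodule ℤ (MonoidAlgebra ℚ (EAG p n)) :=
  Submodule.span ℤ (Set.range (MonoidAlgebra.of ℚ (EAG p n)))

/-- The maximal order `Γ = ∑_{H ≤ G} ℤ[G]·e_H`, as a `ℤ[G]`-submodule of `ℚ[G]`. -/
def GammaOrder (p n : ℕ) [NeZero p] :
    Submodule (MonoidAlgebra ℤ (EAG p n)) (MonoidAlgebra ℚ (EAG p n)) :=
  Submodule.span (MonoidAlgebra ℤ (EAG p n)) (Set.range (eIdem p n))

/-- `J = |G|·Γ = p^n·Γ`. -/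
def Jmod (p n : ℕ) [NeZero p] :
    Submodule (MonoidAlgebra ℤ (EAG p n)) (MonoidAlgebra ℚ (EAG p n)) :=
  Submodule.map
    (LinearMap.lsmul (MonoidAlgebra ℤ (EAG p n)) (MonoidAlgebra ℚ (EAG p n))
      ((p : MonoidAlgebra ℤ (EAG p n)) ^ n)) (GammaOrder p n)

/-- `I`: the `ℤ[G]`-submodule of `ℚ[G]` generated by `{|G|·e_H : H ≤ G, H ≠ G}`. -/
def Imod (p n : ℕ) [NeZero p] :
    Submodule (MonoidAlgebra ℤ (EAG p n)) (MonoidAlgebra ℚ (EAG p n)) :=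
  Submodule.span (MonoidAlgebra ℤ (EAG p n))
    {x | ∃ H : Subgroup (EAG p n), H ≠ ⊤ ∧ x = ((p : ℚ) ^ n) • eIdem p n H}

/-- `G̃ = ∑_{g ∈ G} g ∈ ℚ[G]`. -/
def Gtilde (p n : ℕ) [NeZero p] : MonoidAlgebra ℚ (EAG p n) :=
  ∑ g : EAG p n, MonoidAlgebra.of ℚ (EAG p n) g

open MonoidAlgebra

theorem MonoidAlgebra.sum_of_mul_sum_of_of_isComplement {k G : Type*} [Semiring k] [Group G]
    [Fintype G] {S : Set G} {H : Subgroup G} (hSH : Subgroup.IsComplement S H) :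
    (∑ s : S, of k G s) * (∑ h : H, of k G h) = ∑ g, of k G g := by
  rw [Finset.sum_mul_sum, ← Fintype.sum_prod_type']
  exact Fintype.sum_equiv (.ofBijective (fun x : S × H => (x.1 : G) * x.2) hSH) _ _
    fun x => (map_mul _ _ _).symm

namespace EAG

variable (p n : ℕ)

theorem zgToQg_of (g : EAG p n) : zgToQg p n (of ℤ (EAG p n) g) = of ℚ (EAG p n) g := by
  simp [zgToQg]

theorem smul_eq_zgToQg_mul (a : MonoidAlgebra ℤ (EAG p n)) (x : MonoidAlgebra ℚ (EAG p n)) :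
    a • x = zgToQg p n a * x := rfl

theorem natCast_pow_smul (m : ℕ) (x : MonoidAlgebra ℚ (EAG p n)) :
    ((p : MonoidAlgebra ℤ (EAG p n)) ^ m) • x = ((p : ℚ) ^ m) • x := by
  rw [smul_eq_zgToQg_mul, map_pow, map_natCast, Algebra.smul_def, map_pow, map_natCast]

theorem natCast_smul (x : MonoidAlgebra ℚ (EAG p n)) :
    (p : MonoidAlgebra ℤ (EAG p n)) • x = (p : ℚ) • x := by
  simpa using natCast_pow_smul p n 1 x

theorem card_eq [NeZero p] : Nat.card (EAG p n) = p ^ n := by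
  simp [EAG]

theorem exists_subgroup_index_eq [Fact p.Prime] (hn : 1 ≤ n) :
    ∃ H : Subgroup (EAG p n), H.index = p := by
  have : NeZero p := ⟨(Fact.out : p.Prime).ne_zero⟩
  obtain ⟨m, rfl⟩ : ∃ m, n = m + 1 := ⟨n - 1, by omega⟩
  obtain ⟨H, hH⟩ := Sylow.exists_subgroup_card_pow_prime (G := EAG p (m + 1)) p (n := m)
    (card_eq p (m + 1) ▸ pow_dvd_pow p m.le_succ)
  refine ⟨H, Nat.eq_of_mul_eq_mul_right (pow_pos (Fact.out : p.Prime).pos m) ?_⟩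
  rw [← hH, H.index_mul_card, card_eq, hH, pow_succ']

variable [NeZero p]

theorem pow_smul_eIdem (H : Subgroup (EAG p n)) :
    (p : ℚ) ^ n • eIdem p n H = (H.index : ℚ) • ∑ h : H, of ℚ (EAG p n) h := by
  have hcard : (p : ℚ) ^ n = H.index * Nat.card H := by
    rw [← Nat.cast_pow, ← card_eq, ← H.index_mul_card, Nat.cast_mul]
  rw [eIdem, smul_smul, hcard, mul_inv_cancel_right₀ (by simp)]

theorem pow_smul_eIdem_top : (p : ℚ) ^ n • eIdem p n ⊤ = Gtilde p n := by
  rw [pow_smul_eIdem, Subgroup.index_top, Nat.cast_one, one_smul, Gtilde]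
  exact Fintype.sum_equiv (Equiv.subtypeUnivEquiv Subgroup.mem_top) _ _ fun _ => rfl

theorem eIdem_bot : eIdem p n ⊥ = 1 := by
  rw [eIdem, Subgroup.card_bot, Nat.cast_one, inv_one, one_smul]
  convert Fintype.sum_unique _
  exact (map_one _).symm

theorem of_mem_gammaOrder (g : EAG p n) : of ℚ (EAG p n) g ∈ GammaOrder p n := by
  have : of ℚ (EAG p n) g = of ℤ (EAG p n) g • eIdem p n ⊥ := by
    rw [eIdem_bot, smul_eq_zgToQg_mul, mul_one, zgToQg_of]
  exact this ▸ Submodule.smul_mem _ _ (Submodule.subset_span ⟨⊥, rfl⟩)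

theorem exists_smul_pow_smul_eIdem_eq {H : Subgroup (EAG p n)} (hH : H.index = p) :
    ∃ x : MonoidAlgebra ℤ (EAG p n),
      x • ((p : ℚ) ^ n • eIdem p n H) = (p : ℚ) • Gtilde p n := by
  obtain ⟨S, hS, -⟩ := H.exists_isComplement_left 1
  refine ⟨∑ s : S, of ℤ (EAG p n) s, ?_⟩
  rw [pow_smul_eIdem, hH, smul_eq_zgToQg_mul, map_sum, mul_smul_comm]
  simp only [zgToQg_of]
  rw [sum_of_mul_sum_of_of_isComplement hS, Gtilde]

theorem pow_smul_mem_jmod {x : MonoidAlgebra ℚ (EAG p n)} (hx : x ∈ GammaOrder p n) :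
    (p : ℚ) ^ n • x ∈ Jmod p n :=
  ⟨x, hx, natCast_pow_smul p n n x⟩

theorem pow_succ_smul_eIdem_mem_imod [Fact p.Prime] (hn : 1 ≤ n) (H : Subgroup (EAG p n)) :
    (p : ℚ) ^ (n + 1) • eIdem p n H ∈ Imod p n := by
  by_cases hH : H = ⊤
  · obtain ⟨K, hK⟩ := exists_subgroup_index_eq p n hn
    have hK_ne_top : K ≠ ⊤ := fun h => (Fact.out : p.Prime).ne_one (hK ▸ h ▸ Subgroup.index_top)
    obtain ⟨x, hx⟩ := exists_smul_pow_smul_eIdem_eq p n hK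
    rw [hH, pow_succ', mul_smul, pow_smul_eIdem_top, ← hx]
    exact Submodule.smul_mem _ x (Submodule.subset_span ⟨K, hK_ne_top, rfl⟩)
  · rw [pow_succ', mul_smul, ← natCast_smul]
    exact Submodule.smul_mem _ _ (Submodule.subset_span ⟨H, hH, rfl⟩)

end EAG

open EAG in
/-- For `G` elementary abelian of rank `n ≥ 2`: `p·J ⊆ I ⊆ J`, and moreover
`p^(n+1)·ℤ[G] ⊆ p·J`. -/
theorem pJ_subset_I_subset_J_and_pPowSuccZG_subset_pJ (p n : ℕ) [Fact p.Prime] (hn : 2 ≤ n) :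
    Submodule.map
        (LinearMap.lsmul (MonoidAlgebra ℤ (EAG p n)) (MonoidAlgebra ℚ (EAG p n))
          (p : MonoidAlgebra ℤ (EAG p n))) (Jmod p n) ≤ Imod p n ∧
      Imod p n ≤ Jmod p n ∧
      Submodule.map (LinearMap.lsmul ℤ (MonoidAlgebra ℚ (EAG p n)) ((p : ℤ) ^ (n + 1)))
          (ZGimage p n) ≤
        (Submodule.map
            (LinearMap.lsmul (MonoidAlgebra ℤ (EAG p n)) (MonoidAlgebra ℚ (EAG p n))
              (p : MonoidAlgebra ℤ (EAG p n))) (Jmod p n)).restrictScalars ℤ := by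
  have : NeZero p := ⟨(Fact.out : p.Prime).ne_zero⟩
  refine ⟨?_, ?_, ?_⟩
  · rw [Submodule.map_le_iff_le_comap, Jmod, Submodule.map_le_iff_le_comap, GammaOrder,
      Submodule.span_le]
    rintro _ ⟨H, rfl⟩
    simpa [natCast_pow_smul, natCast_smul, smul_smul, ← pow_succ'] using
      pow_succ_smul_eIdem_mem_imod p n (by omega) H
  · rw [Imod, Submodule.span_le]
    rintro _ ⟨H, -, rfl⟩
    exact pow_smul_mem_jmod p n (Submodule.subset_span ⟨H, rfl⟩)
  · rw [Submodule.map_le_iff_le_comap, ZGimage, Submodule.span_le]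
    rintro _ ⟨g, rfl⟩
    refine ⟨_, pow_smul_mem_jmod p n (of_mem_gammaOrder p n g), ?_⟩
    simp [natCast_smul, ← pow_succ']
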